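/- Dual configurations have dual-enabled actions: if the configuration (ν, S) can perform action † m, then the configuration (ν, dual S) with the same clock valuation can perform the complementary action †̄ m (with the opposite direction and the same message). -/

import Mathlib

open scoped NNReal

/-- A clock valuation over a set of clocks. -/
abbrev Val (Clock : Type) := Clock → ℝ≥0

/-- Time shift of a valuation. -/
def shift {Clock : Type} (ν : Val Clock) (t : ℝ≥0) : Val Clock := fun x => ν x + t

open Classical in
/-- Reset the clocks in `r` to zero. -/
noncomputable def resetVal {Clock : Type} (ν : Val Clock) (r : Set Clock) : Val Clock :=
  fun x => if x ∈ r then 0 else ν x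

/-- Clock constraints. -/
inductive Constr (Clock : Type) : Type where
  | tt : Constr Clock
  | gt (x : Clock) (n : ℕ) : Constr Clock
  | eq (x : Clock) (n : ℕ) : Constr Clock
  | dgt (x y : Clock) (n : ℕ) : Constr Clock
  | deq (x y : Clock) (n : ℕ) : Constr Clock
  | not (δ : Constr Clock) : Constr Clock
  | and (δ₁ δ₂ : Constr Clock) : Constr Clock

/-- Satisfaction of a clock constraint. -/
def sat {Clock : Type} (ν : Val Clock) : Constr Clock → Prop
  | .tt => True
  | .gt x n => (n : ℝ≥0) < ν x
  | .eq x n => ν x = (n : ℝ≥0)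
  | .dgt x y n => ν y + (n : ℝ≥0) < ν x
  | .deq x y n => ν x = ν y + (n : ℝ≥0)
  | .not δ => ¬ sat ν δ
  | .and δ₁ δ₂ => sat ν δ₁ ∧ sat ν δ₂

/-- Semantic past of a constraint: ν ⊨ ↓δ iff ∃ t ≥ 0, ν + t ⊨ δ. -/
def satPast {Clock : Type} (ν : Val Clock) (δ : Constr Clock) : Prop :=
  ∃ t : ℝ≥0, sat (shift ν t) δ

/-- Communication direction: send (!) or receive (?). -/
inductive Dir : Type where
  | send
  | recv
deriving DecidableEq

def Dir.flip : Dir → Dir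
  | .send => .recv
  | .recv => .send

/-- TOAST session types.  A choice is a list of options
`(direction, label, payload, guard, resets, continuation)` where the payload is either
a base sort (indexed by a natural number) or a delegated session `(δ', S')`. -/
inductive SType (Clock : Type) : Type where
  | done : SType Clock
  | var (α : ℕ) : SType Clock
  | mu (α : ℕ) (S : SType Clock) : SType Clock
  | choice
      (opts : List (Dir × ℕ × (ℕ ⊕ (Constr Clock × SType Clock)) × Constr Clock × Set Clock × SType Clock)) :
      SType Clock

/-- An option of a choice type. -/
abbrev SOpt (Clock : Type) :=
  Dir × ℕ × (ℕ ⊕ (Constr Clock × SType Clock)) × Constr Clock × Set Clock × SType Clock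

def SOpt.dir {Clock : Type} (o : SOpt Clock) : Dir := o.1
def SOpt.label {Clock : Type} (o : SOpt Clock) : ℕ := o.2.1
def SOpt.payload {Clock : Type} (o : SOpt Clock) : ℕ ⊕ (Constr Clock × SType Clock) := o.2.2.1
def SOpt.guard {Clock : Type} (o : SOpt Clock) : Constr Clock := o.2.2.2.1
def SOpt.resets {Clock : Type} (o : SOpt Clock) : Set Clock := o.2.2.2.2.1
def SOpt.cont {Clock : Type} (o : SOpt Clock) : SType Clock := o.2.2.2.2.2

/-- Duality: swap send and receive on every option, keeping everything else. -/
def SType.dual {Clock : Type} : SType Clock → SType Clock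
  | .done => .done
  | .var α => .var α
  | .mu α S => .mu α S.dual
  | .choice opts =>
      .choice (opts.attach.map fun ⟨(d, l, p, g, r, c), _hmem⟩ => (d.flip, l, p, g, r, c.dual))
decreasing_by
  all_goals simp_wf
  all_goals first
    | omega
    | (have h := List.sizeOf_lt_of_mem _hmem
       simp only [Prod.mk.sizeOf_spec] at h
       omega)

/-- Substitution of `S'` for the recursion variable `α`. -/
def subst {Clock : Type} (S' : SType Clock) (α : ℕ) : SType Clock → SType Clock
  | .done => .done
  | .var β => if β = α then S' else .var β
  | .mu β S => if β = α then .mu β S else .mu β (subst S' α S)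
  | .choice opts =>
      .choice (opts.attach.map fun ⟨(d, l, p, g, r, c), _hmem⟩ => (d, l, p, g, r, subst S' α c))
decreasing_by
  all_goals simp_wf
  all_goals first
    | omega
    | (have h := List.sizeOf_lt_of_mem _hmem
       simp only [Prod.mk.sizeOf_spec] at h
       omega)

/-- Free recursion variables. -/
inductive FreeIn {Clock : Type} (α : ℕ) : SType Clock → Prop where
  | var : FreeIn α (.var α)
  | mu {β : ℕ} {S : SType Clock} : α ≠ β → FreeIn α S → FreeIn α (.mu β S)
  | choice {opts : List (SOpt Clock)} {o : SOpt Clock} :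
      o ∈ opts → FreeIn α o.cont → FreeIn α (.choice opts)

/-- Capture-avoiding substitutions. -/
inductive CA {Clock : Type} (S' : SType Clock) (α : ℕ) : SType Clock → Prop where
  | done : CA S' α .done
  | var {β : ℕ} : CA S' α (.var β)
  | mu_eq {S : SType Clock} : CA S' α (.mu α S)
  | mu {β : ℕ} {S : SType Clock} :
      β ≠ α → ¬ FreeIn β S' → CA S' α S → CA S' α (.mu β S)
  | choice {opts : List (SOpt Clock)} :
      (∀ o ∈ opts, CA S' α o.cont) → CA S' α (.choice opts)

/-- Semantic clock constraints (sets of valuations). -/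
abbrev SemC (Clock : Type) := Set (Val Clock)

/-- Environments mapping recursion variables to constraints. -/
abbrev REnv (Clock : Type) := ℕ → Option (SemC Clock)

/-- Semantic past of a set of valuations. -/
def pastSem {Clock : Type} (D : SemC Clock) : SemC Clock := {ν | ∃ t : ℝ≥0, shift ν t ∈ D}

/-- Well-formedness judgement `Ψ ; δ ⊢ S`. -/
inductive WF {Clock : Type} : REnv Clock → SemC Clock → SType Clock → Prop where
  | done {Ψ : REnv Clock} : WF Ψ Set.univ .done
  | var {Ψ : REnv Clock} {α : ℕ} {D : SemC Clock} : Ψ α = some D → WF Ψ D (.var α)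
  | mu {Ψ : REnv Clock} {α : ℕ} {D : SemC Clock} {S : SType Clock} :
      WF (Function.update Ψ α (some D)) D S → WF Ψ D (.mu α S)
  | choice {Ψ : REnv Clock} {opts : List (SOpt Clock)}
      (Ds : SOpt Clock → SemC Clock) (Dd : Constr Clock × SType Clock → SemC Clock) :
      opts ≠ [] →
      -- feasibility (the functions `Ds`, `Dd` choose the future environments)
      (∀ o ∈ opts, WF Ψ (Ds o) o.cont) →
      (∀ o ∈ opts, ∀ ν : Val Clock, sat ν o.guard → resetVal ν o.resets ∈ Ds o) →
      -- mixed-choice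
      (∀ o ∈ opts, ∀ o' ∈ opts, o ≠ o' →
        (∀ ν : Val Clock, ¬ (sat ν o.guard ∧ sat ν o'.guard)) ∨ o.dir = o'.dir) →
      -- delegation
      (∀ o ∈ opts, ∀ (δ' : Constr Clock) (S' : SType Clock), o.payload = Sum.inr (δ', S') →
        WF (fun _ => none) (Dd (δ', S')) S') →
      (∀ o ∈ opts, ∀ (δ' : Constr Clock) (S' : SType Clock), o.payload = Sum.inr (δ', S') →
        ∀ ν : Val Clock, sat ν δ' → ν ∈ Dd (δ', S')) →
      WF Ψ (pastSem {ν | ∃ o ∈ opts, sat ν o.guard}) (.choice opts)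

/-- A configuration `(ν, S)` is well-formed. -/
def WFConfig {Clock : Type} (ν : Val Clock) (S : SType Clock) : Prop :=
  ∃ D : SemC Clock, WF (fun _ => none) D S ∧ ν ∈ D

/-- Equality up to unfolding of recursive types. -/
inductive UTU {Clock : Type} : SType Clock → SType Clock → Prop where
  | refl (S : SType Clock) : UTU S S
  | symm {S S' : SType Clock} : UTU S S' → UTU S' S
  | trans {S S' S'' : SType Clock} : UTU S S' → UTU S' S'' → UTU S S''
  | unfold {α : ℕ} {S : SType Clock} :
      CA (.mu α S) α S → UTU (.mu α S) (subst (.mu α S) α S)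
  | mu {α : ℕ} {S S' : SType Clock} : UTU S S' → UTU (.mu α S) (.mu α S')
  | choice {pre post : List (SOpt Clock)} {d : Dir} {l : ℕ}
      {p : ℕ ⊕ (Constr Clock × SType Clock)} {g : Constr Clock} {r : Set Clock}
      {S S' : SType Clock} :
      UTU S S' →
      UTU (.choice (pre ++ (d, l, p, g, r, S) :: post))
          (.choice (pre ++ (d, l, p, g, r, S') :: post))

/-- Messages: a label together with a payload. -/
abbrev Msg (Clock : Type) := ℕ × (ℕ ⊕ (Constr Clock × SType Clock))

/-- Configuration transitions (rules [act] and [unfold]). -/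
inductive Step {Clock : Type} :
    Val Clock × SType Clock → Dir × Msg Clock → Val Clock × SType Clock → Prop where
  | act {ν : Val Clock} {opts : List (SOpt Clock)} {o : SOpt Clock} :
      o ∈ opts → sat ν o.guard →
      Step (ν, .choice opts) (o.dir, (o.label, o.payload)) (resetVal ν o.resets, o.cont)
  | unfold {ν : Val Clock} {α : ℕ} {S : SType Clock} {a : Dir × Msg Clock}
      {c' : Val Clock × SType Clock} :
      Step (ν, subst (.mu α S) α S) a c' → Step (ν, .mu α S) a c'

/-- Future-enabled configurations: some delay followed by an action is possible. -/
def FE {Clock : Type} (c : Val Clock × SType Clock) : Prop :=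
  ∃ (t : ℝ≥0) (a : Dir × Msg Clock) (c' : Val Clock × SType Clock), Step (shift c.1 t, c.2) a c'

/-- Configurations with queues. -/
abbrev Cfg3 (Clock : Type) := Val Clock × SType Clock × List (Msg Clock)

/-- Labels for transitions of configurations with queues. -/
inductive QLabel (Clock : Type) : Type where
  | send (m : Msg Clock)
  | enq (m : Msg Clock)
  | tau
  | time (t : ℝ≥0)

/-- Transitions of configurations with queues (rules [send], [recv], [que], [time]). -/
inductive QStep {Clock : Type} : Cfg3 Clock → QLabel Clock → Cfg3 Clock → Prop where
  | send {ν S Q ν' S'} {m : Msg Clock} :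
      Step (ν, S) (Dir.send, m) (ν', S') → QStep (ν, S, Q) (.send m) (ν', S', Q)
  | recv {ν S Q ν' S'} {m : Msg Clock} :
      Step (ν, S) (Dir.recv, m) (ν', S') → QStep (ν, S, m :: Q) .tau (ν', S', Q)
  | que {ν S Q} {m : Msg Clock} : QStep (ν, S, Q) (.enq m) (ν, S, Q ++ [m])
  | time {ν : Val Clock} {S : SType Clock} {Q : List (Msg Clock)} {t : ℝ≥0} :
      -- persistency
      (FE (ν, S) → FE (shift ν t, S)) →
      -- urgency: no message can be consumed from the queue at any earlier time
      (∀ t' : ℝ≥0, t' < t → ∀ (m : Msg Clock) (Q' : List (Msg Clock))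
          (c' : Val Clock × SType Clock),
        Q = m :: Q' → ¬ Step (shift ν t', S) (Dir.recv, m) c') →
      QStep (ν, S, Q) (.time t) (shift ν t, S, Q)

/-- System labels. -/
inductive SysLabel : Type where
  | tau
  | time (t : ℝ≥0)

/-- System transitions (rules [com-l], [com-r], [par-l], [par-r], [wait]). -/
inductive SysStep {Clock : Type} :
    Cfg3 Clock × Cfg3 Clock → SysLabel → Cfg3 Clock × Cfg3 Clock → Prop where
  | coml {c₁ c₂ c₁' c₂' : Cfg3 Clock} {m : Msg Clock} :
      QStep c₁ (.send m) c₁' → QStep c₂ (.enq m) c₂' → SysStep (c₁, c₂) .tau (c₁', c₂')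
  | comr {c₁ c₂ c₁' c₂' : Cfg3 Clock} {m : Msg Clock} :
      QStep c₂ (.send m) c₂' → QStep c₁ (.enq m) c₁' → SysStep (c₁, c₂) .tau (c₁', c₂')
  | parl {c₁ c₂ c₁' : Cfg3 Clock} :
      QStep c₁ .tau c₁' → SysStep (c₁, c₂) .tau (c₁', c₂)
  | parr {c₁ c₂ c₂' : Cfg3 Clock} :
      QStep c₂ .tau c₂' → SysStep (c₁, c₂) .tau (c₁, c₂')
  | wait {c₁ c₂ c₁' c₂' : Cfg3 Clock} {t : ℝ≥0} :
      QStep c₁ (.time t) c₁' → QStep c₂ (.time t) c₂' → SysStep (c₁, c₂) (.time t) (c₁', c₂')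

/-- A relation closed under the compatibility conditions. -/
def CompatClosed {Clock : Type} (R : Cfg3 Clock → Cfg3 Clock → Prop) : Prop :=
  ∀ (ν₁ : Val Clock) (S₁ : SType Clock) (Q₁ : List (Msg Clock))
    (ν₂ : Val Clock) (S₂ : SType Clock) (Q₂ : List (Msg Clock)),
    R (ν₁, S₁, Q₁) (ν₂, S₂, Q₂) →
      (Q₁ = [] ∨ Q₂ = []) ∧
      (∀ m Q₁', Q₁ = m :: Q₁' →
        ∃ ν₁' S₁', Step (ν₁, S₁) (Dir.recv, m) (ν₁', S₁') ∧ R (ν₁', S₁', Q₁') (ν₂, S₂, Q₂)) ∧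
      (∀ m Q₂', Q₂ = m :: Q₂' →
        ∃ ν₂' S₂', Step (ν₂, S₂) (Dir.recv, m) (ν₂', S₂') ∧ R (ν₁, S₁, Q₁) (ν₂', S₂', Q₂')) ∧
      (Q₁ = [] → Q₂ = [] → S₁ = S₂.dual ∧ ν₁ = ν₂)

/-- Compatibility: the largest relation satisfying the compatibility conditions. -/
def Compat {Clock : Type} (c₁ c₂ : Cfg3 Clock) : Prop :=
  ∃ R, CompatClosed R ∧ R c₁ c₂

/-- Final configurations with queues. -/
def Final {Clock : Type} (c : Cfg3 Clock) : Prop :=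
  UTU c.2.1 .done ∧ c.2.2 = []

/-- Progress for systems. -/
def Progress {Clock : Type} (sys : Cfg3 Clock × Cfg3 Clock) : Prop :=
  ∀ sys', Relation.ReflTransGen (fun a b => ∃ ℓ, SysStep a ℓ b) sys sys' →
    (Final sys'.1 ∧ Final sys'.2) ∨
    ∃ (t : ℝ≥0) (sys₂ sys₃ : Cfg3 Clock × Cfg3 Clock),
      SysStep sys' (.time t) sys₂ ∧ SysStep sys₂ .tau sys₃

/-- Session environments: partial maps from roles to configurations and from
queue endpoints `qp` (a pair of roles, the second being the reading role) to queues. -/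
structure SEnv (Clock Role : Type) : Type where
  cfg : Role → Option (Val Clock × SType Clock)
  que : Role × Role → Option (List (Msg Clock))

/-- A session environment is well-formed if every configuration in its range is. -/
def SEnv.WFE {Clock Role : Type} (Δ : SEnv Clock Role) : Prop :=
  ∀ p ν S, Δ.cfg p = some (ν, S) → WFConfig ν S

/-- `Δ` is `t`-reading: some role can perform a receive within `t`. -/
def TReading {Clock Role : Type} (Δ : SEnv Clock Role) (t : ℝ≥0) : Prop :=
  ∃ t' : ℝ≥0, t' < t ∧ ∃ p ν S, Δ.cfg p = some (ν, S) ∧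
    ∃ (m : Msg Clock) (c' : Val Clock × SType Clock), Step (shift ν t', S) (Dir.recv, m) c'

/-- A relation closed under the balancing conditions. -/
def BalClosed {Clock Role : Type} [DecidableEq Role]
    (R : SEnv Clock Role → Prop) : Prop :=
  ∀ Δ, R Δ →
    -- (1) pending messages can be received, and receiving them stays balanced
    (∀ q p ν S m Q, Δ.cfg p = some (ν, S) → Δ.que (q, p) = some (m :: Q) →
      ∃ ν' S', Step (ν, S) (Dir.recv, m) (ν', S') ∧
        R ⟨Function.update Δ.cfg p (some (ν', S')),
           Function.update Δ.que (q, p) (some Q)⟩) ∧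
    -- (2) a missing queue can be completed to a compatible pair
    (∀ p q ν₁ S₁ Q₁ ν₂ S₂, Δ.cfg p = some (ν₁, S₁) → Δ.que (q, p) = some Q₁ →
      Δ.cfg q = some (ν₂, S₂) →
      ∃ Q₂, Compat (ν₁, S₁, Q₁) (ν₂, S₂, Q₂)) ∧
    -- (3) full pairs are compatible
    (∀ p q ν₁ S₁ Q₁ ν₂ S₂ Q₂, Δ.cfg p = some (ν₁, S₁) → Δ.que (q, p) = some Q₁ →
      Δ.cfg q = some (ν₂, S₂) → Δ.que (p, q) = some Q₂ →
      Compat (ν₁, S₁, Q₁) (ν₂, S₂, Q₂))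

/-- Balanced session environments: the largest relation closed under the balancing rules. -/
def BalancedEnv {Clock Role : Type} [DecidableEq Role] (Δ : SEnv Clock Role) : Prop :=
  ∃ R, BalClosed R ∧ R Δ

/-- Delayable session environments. -/
def Delayable {Clock Role : Type} (Δ : SEnv Clock Role) : Prop :=
  ∀ q p Q, Δ.que (q, p) = some Q → Q ≠ [] → Δ.cfg p = none

def dualOpt {Clock : Type} (o : SOpt Clock) : SOpt Clock :=
  (o.1.flip, o.2.1, o.2.2.1, o.2.2.2.1, o.2.2.2.2.1, o.2.2.2.2.2.dual)

lemma dual_choice {Clock : Type} (opts : List (SOpt Clock)) :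
    (SType.choice opts).dual = .choice (opts.map dualOpt) := by
  rw [SType.dual]
  congr 1
  have : (fun x : {x // x ∈ opts} =>
      match x with | ⟨(d, l, p, g, r, c), _⟩ => (d.flip, l, p, g, r, c.dual)) =
      fun x => dualOpt x.1 := by
    funext x; rcases x with ⟨⟨d, l, p, g, r, c⟩, h⟩; rfl
  rw [this]
  exact List.attach_map_val

def substOpt {Clock : Type} (S' : SType Clock) (α : ℕ) (o : SOpt Clock) : SOpt Clock :=
  (o.1, o.2.1, o.2.2.1, o.2.2.2.1, o.2.2.2.2.1, subst S' α o.2.2.2.2.2)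

lemma subst_choice {Clock : Type} (S' : SType Clock) (α : ℕ) (opts : List (SOpt Clock)) :
    subst S' α (SType.choice opts) = .choice (opts.map (substOpt S' α)) := by
  rw [subst]
  congr 1
  have : (fun x : {x // x ∈ opts} =>
      match x with | ⟨(d, l, p, g, r, c), _⟩ => (d, l, p, g, r, subst S' α c)) =
      fun x => substOpt S' α x.1 := by
    funext x; rcases x with ⟨⟨d, l, p, g, r, c⟩, h⟩; rfl
  rw [this]
  exact List.attach_map_val

lemma dual_subst {Clock : Type} (S' : SType Clock) (α : ℕ) (S : SType Clock) :
    (subst S' α S).dual = subst S'.dual α S.dual := by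
  induction S using SType.dual.induct with
  | case1 => simp [subst, SType.dual]
  | case2 β =>
    simp only [subst]
    split <;> simp [SType.dual, subst, *]
  | case3 β T ih =>
    by_cases h : β = α
    · subst h; simp [subst, SType.dual]
    · simp [subst, SType.dual, h, ih]
  | case4 opts ih =>
    rw [subst_choice, dual_choice, dual_choice, subst_choice, List.map_map, List.map_map]
    congr 1
    refine List.map_congr_left ?_
    rintro ⟨d, l, p, g, r, c⟩ hmem
    simp [dualOpt, substOpt, ih d l p g r c hmem]

lemma dual_enabled_aux {Clock : Type} {cfg : Val Clock × SType Clock}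
    {a : Dir × Msg Clock} {c : Val Clock × SType Clock} (h : Step cfg a c) :
    ∃ c', Step (cfg.1, cfg.2.dual) (a.1.flip, a.2) c' := by
  induction h with
  | @act ν opts o hmem hsat =>
      refine ⟨(resetVal ν (dualOpt o).resets, (dualOpt o).cont), ?_⟩
      have hmem' : dualOpt o ∈ opts.map dualOpt := List.mem_map_of_mem hmem
      have := Step.act (ν := ν) hmem' (by exact hsat)
      rw [dual_choice]
      convert this using 2 <;> rfl
  | @unfold ν α S a c' _ ih =>
      simp only [SType.dual]
      obtain ⟨c'', hc''⟩ := ih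
      rw [dual_subst] at hc''
      simp only [SType.dual] at hc''
      exact ⟨c'', Step.unfold hc''⟩

/-- dual configurations have dual-enabled actions. -/
theorem dual_enabled {Clock : Type} {ν : Val Clock} {S : SType Clock}
    {d : Dir} {m : Msg Clock} {c : Val Clock × SType Clock}
    (h : Step (ν, S) (d, m) c) :
    ∃ c' : Val Clock × SType Clock, Step (ν, S.dual) (d.flip, m) c' :=
  dual_enabled_aux h
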